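/- arXiv:2309.05508 — 2 statements merged into one kernel-verified Lean document; each statement's English description precedes it below -/
import Mathlib

section
/- Let (g, ·) be a real Leibniz algebra, i.e. a real vector space g with a bilinear operation · satisfying x·(y·z) = (x·y)·z + y·(x·z) for all x,y,z in g. Define [a,b] := a·b - b·a and {a,b,c} := -(a·b)·c. Then (g, [·,·], {·,·,·}) is a Lie-Yamaguti algebra, i.e. the operations satisfy axioms (LY1)–(LY6). -/
/-- The Lie-Yamaguti algebra axioms (LY1)-(LY6) for a binary operation `br`
and a ternary operation `tr`. -/
def IsLieYamaguti {g : Type*} [AddCommGroup g] (br : g → g → g) (tr : g → g → g → g) : Prop :=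
  (∀ x y, br x y = - br y x) ∧
  (∀ x y z, tr x y z = - tr y x z) ∧
  (∀ x y z, (br (br x y) z + tr x y z) + (br (br y z) x + tr y z x) +
      (br (br z x) y + tr z x y) = 0) ∧
  (∀ x y z u, tr (br x y) z u + tr (br y z) x u + tr (br z x) y u = 0) ∧
  (∀ x y u v, tr x y (br u v) = br (tr x y u) v + br u (tr x y v)) ∧
  (∀ x y u v w, tr x y (tr u v w) =
      tr (tr x y u) v w + tr u (tr x y v) w + tr u v (tr x y w))

/-- A real Leibniz algebra with `[a,b] := a·b - b·a` and `{a,b,c} := -(a·b)·c`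
is a Lie-Yamaguti algebra. -/
theorem leibniz_isLieYamaguti (g : Type*) [AddCommGroup g] [Module ℝ g]
    (mul : g →ₗ[ℝ] g →ₗ[ℝ] g)
    (hLeib : ∀ x y z : g, mul x (mul y z) = mul (mul x y) z + mul y (mul x z)) :
    IsLieYamaguti (fun a b : g => mul a b - mul b a)
      (fun a b c : g => -(mul (mul a b) c)) := by
  have L : ∀ a b c : g, mul (mul a b) c = mul a (mul b c) - mul b (mul a c) := by
    intro a b c; rw [hLeib]; abel
  refine ⟨?_, ?_, ?_, ?_, ?_, ?_⟩ <;> intros <;>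
    simp only [L, map_sub, map_add, map_neg, LinearMap.sub_apply, LinearMap.add_apply,
      LinearMap.neg_apply] <;> abel
end

section
/- Let (g, [·,·], {·,·,·}) be a Lie-Yamaguti algebra and (V; ρ, D, θ) a representation of g on a real vector space V. For a linear map f: g → V define δ_I f(x₁,x₂) := ρ(x₁)f(x₂) - ρ(x₂)f(x₁) - f([x₁,x₂]) and δ_II f(x₁,x₂,x₃) := θ(x₂,x₃)f(x₁) - θ(x₁,x₃)f(x₂) + D(x₁,x₂)f(x₃) - f({x₁,x₂,x₃}). Then δδ = 0 in the following sense: for all x₁,x₂,x₃,x₄,x₅ in g, (i) -ρ(x₃)(δ_II f)(x₁,x₂,x₄) + ρ(x₄)(δ_II f)(x₁,x₂,x₃) + (δ_II f)(x₁,x₂,[x₃,x₄]) + D(x₁,x₂)(δ_I f)(x₃,x₄) - (δ_I f)({x₁,x₂,x₃},x₄) - (δ_I f)(x₃,{x₁,x₂,x₄}) = 0, and (ii) -θ(x₄,x₅)(δ_II f)(x₁,x₂,x₃) + θ(x₃,x₅)(δ_II f)(x₁,x₂,x₄) + D(x₁,x₂)(δ_II f)(x₃,x₄,x₅) - D(x₃,x₄)(δ_II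 f)(x₁,x₂,x₅) - (δ_II f)({x₁,x₂,x₃},x₄,x₅) - (δ_II f)(x₃,{x₁,x₂,x₄},x₅) - (δ_II f)(x₃,x₄,{x₁,x₂,x₅}) + (δ_II f)(x₁,x₂,{x₃,x₄,x₅}) = 0. -/
/-- A (real) Lie-Yamaguti algebra structure on `g`: a bilinear bracket `br`, a
trilinear bracket `tr`, and the axioms (LY1)-(LY6). -/
structure LieYamaguti (g : Type*) [AddCommGroup g] [Module ℝ g] where
  br : g →ₗ[ℝ] g →ₗ[ℝ] g
  tr : g →ₗ[ℝ] g →ₗ[ℝ] g →ₗ[ℝ] g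
  ly1 : ∀ x y, br x y = - br y x
  ly2 : ∀ x y z, tr x y z = - tr y x z
  ly3 : ∀ x y z, (br (br x y) z + tr x y z) + (br (br y z) x + tr y z x) +
      (br (br z x) y + tr z x y) = 0
  ly4 : ∀ x y z u, tr (br x y) z u + tr (br y z) x u + tr (br z x) y u = 0
  ly5 : ∀ x y u v, tr x y (br u v) = br (tr x y u) v + br u (tr x y v)
  ly6 : ∀ x y u v w, tr x y (tr u v w) =
      tr (tr x y u) v w + tr u (tr x y v) w + tr u v (tr x y w)

/-- A representation of a Lie-Yamaguti algebra `(g, L)` on a real vector space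
`V`: maps `ρ : g → End(V)` and bilinear `D, θ : g × g → End(V)` satisfying
(RLY1)-(RLY6), where `*` is composition in `End(V)`. -/
structure LYRep (g V : Type*) [AddCommGroup g] [Module ℝ g]
    [AddCommGroup V] [Module ℝ V] (L : LieYamaguti g) where
  ρ : g →ₗ[ℝ] Module.End ℝ V
  D : g →ₗ[ℝ] g →ₗ[ℝ] Module.End ℝ V
  θ : g →ₗ[ℝ] g →ₗ[ℝ] Module.End ℝ V
  rly1 : ∀ a b, D a b + θ a b - θ b a = ρ a * ρ b - ρ b * ρ a - ρ (L.br a b)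
  rly2 : ∀ a b c, θ a (L.br b c) - ρ b * θ a c + ρ c * θ a b = 0
  rly3 : ∀ a b c, θ (L.br a b) c - θ a c * ρ b + θ b c * ρ a = 0
  rly4 : ∀ a b c d, θ c d * θ a b - θ b d * θ a c - θ a (L.tr b c d) + D b c * θ a d = 0
  rly5 : ∀ a b c, D a b * ρ c - ρ c * D a b = ρ (L.tr a b c)
  rly6 : ∀ a b c d, D a b * θ c d - θ c d * D a b = θ (L.tr a b c) d + θ c (L.tr a b d)

variable {g V : Type*} [AddCommGroup g] [Module ℝ g] [AddCommGroup V] [Module ℝ V]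

/-- `δ_I f (x₁,x₂) = ρ(x₁)f(x₂) - ρ(x₂)f(x₁) - f([x₁,x₂])`. -/
def dI (L : LieYamaguti g) (R : LYRep g V L) (f : g →ₗ[ℝ] V) (x₁ x₂ : g) : V :=
  R.ρ x₁ (f x₂) - R.ρ x₂ (f x₁) - f (L.br x₁ x₂)

/-- `δ_II f (x₁,x₂,x₃) = θ(x₂,x₃)f(x₁) - θ(x₁,x₃)f(x₂) + D(x₁,x₂)f(x₃) - f({x₁,x₂,x₃})`. -/
def dII (L : LieYamaguti g) (R : LYRep g V L) (f : g →ₗ[ℝ] V) (x₁ x₂ x₃ : g) : V :=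
  R.θ x₂ x₃ (f x₁) - R.θ x₁ x₃ (f x₂) + R.D x₁ x₂ (f x₃) - f (L.tr x₁ x₂ x₃)

/-- Derived identity: `D({a,b,c},d) + D(c,{a,b,d}) = [D(a,b), D(c,d)]`. -/
lemma LYRep.Drel (L : LieYamaguti g) (R : LYRep g V L) (a b c d : g) :
    R.D (L.tr a b c) d + R.D c (L.tr a b d) = R.D a b * R.D c d - R.D c d * R.D a b := by
  have hly5 : R.ρ (L.tr a b (L.br c d)) =
      R.ρ (L.br (L.tr a b c) d) + R.ρ (L.br c (L.tr a b d)) := by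
    rw [L.ly5]; exact map_add _ _ _
  linear_combination (norm := noncomm_ring)
    R.rly1 (L.tr a b c) d + R.rly1 c (L.tr a b d)
    - (R.D a b * R.rly1 c d - R.rly1 c d * R.D a b)
    + R.rly6 a b c d - R.rly6 a b d c
    - R.rly5 a b c * R.ρ d - R.ρ c * R.rly5 a b d
    + R.rly5 a b d * R.ρ c + R.ρ d * R.rly5 a b c
    + R.rly5 a b (L.br c d) + hly5

/-- For a linear map `f : g → V`, the coboundary of the `(2,3)`-cochain
`(δ_I f, δ_II f)` vanishes: `δδ = 0` at the bottom level. -/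
theorem delta_delta_eq_zero_of_linear (L : LieYamaguti g) (R : LYRep g V L)
    (f : g →ₗ[ℝ] V) :
    ∀ x₁ x₂ x₃ x₄ x₅ : g,
      (- R.ρ x₃ (dII L R f x₁ x₂ x₄) + R.ρ x₄ (dII L R f x₁ x₂ x₃)
        + dII L R f x₁ x₂ (L.br x₃ x₄)
        + R.D x₁ x₂ (dI L R f x₃ x₄)
        - dI L R f (L.tr x₁ x₂ x₃) x₄ - dI L R f x₃ (L.tr x₁ x₂ x₄) = 0) ∧
      (- R.θ x₄ x₅ (dII L R f x₁ x₂ x₃) + R.θ x₃ x₅ (dII L R f x₁ x₂ x₄)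
        + R.D x₁ x₂ (dII L R f x₃ x₄ x₅) - R.D x₃ x₄ (dII L R f x₁ x₂ x₅)
        - dII L R f (L.tr x₁ x₂ x₃) x₄ x₅ - dII L R f x₃ (L.tr x₁ x₂ x₄) x₅
        - dII L R f x₃ x₄ (L.tr x₁ x₂ x₅) + dII L R f x₁ x₂ (L.tr x₃ x₄ x₅) = 0) := by
  intro x₁ x₂ x₃ x₄ x₅
  constructor
  · have h1 := LinearMap.congr_fun (R.rly5 x₁ x₂ x₃) (f x₄)
    have h2 := LinearMap.congr_fun (R.rly5 x₁ x₂ x₄) (f x₃)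
    have h3 := LinearMap.congr_fun (R.rly2 x₁ x₃ x₄) (f x₂)
    have h4 := LinearMap.congr_fun (R.rly2 x₂ x₃ x₄) (f x₁)
    have h5 := congrArg f (L.ly5 x₁ x₂ x₃ x₄)
    simp only [LinearMap.sub_apply, LinearMap.add_apply, Module.End.mul_apply,
      LinearMap.zero_apply, map_add] at h1 h2 h3 h4 h5
    simp only [dI, dII, map_add, map_sub, map_neg]
    linear_combination (norm := module) h1 - h2 - h3 + h4 - h5
  · have h1 := LinearMap.congr_fun (R.rly6 x₁ x₂ x₃ x₅) (f x₄)
    have h2 := LinearMap.congr_fun (R.rly6 x₁ x₂ x₄ x₅) (f x₃)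
    have h3 := LinearMap.congr_fun (R.rly4 x₁ x₃ x₄ x₅) (f x₂)
    have h4 := LinearMap.congr_fun (R.rly4 x₂ x₃ x₄ x₅) (f x₁)
    have h5 := congrArg f (L.ly6 x₁ x₂ x₃ x₄ x₅)
    have h6 := LinearMap.congr_fun (R.Drel L x₁ x₂ x₃ x₄) (f x₅)
    simp only [LinearMap.sub_apply, LinearMap.add_apply, Module.End.mul_apply,
      LinearMap.zero_apply, map_add] at h1 h2 h3 h4 h5 h6
    simp only [dI, dII, map_add, map_sub, map_neg]
    linear_combination (norm := module) -h1 + h2 + h3 - h4 - h5 - h6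
end
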